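/- Let k ≥ 1, ε ∈ (0, 1/4^{k+2}), γ := 4·√ε, n ≥ 1, and let B ⊆ {0,1}^n satisfy |B| ≥ 2^{k+1}·(n+1)·2^{(1−ε)n}. Then the number of k-tuples (b_1,…,b_k) ∈ B^k such that for every z ∈ {0,1}^k the set {i ∈ {1,…,n} : b_j(i) = z_j for all j ∈ {1,…,k}} has size in [n/2^k − γn, n/2^k + γn] is at least (|B|/2)^k. -/

import Mathlib

/-!
Build the tuple one vector at a time, keeping it *balanced*: each of the `2^j` pattern classes
of a `j`-tuple has size `n/2^j` up to `2t`, where `t = √ε·n`. Appending `b` preserves this as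
soon as `b` takes the value `true` on half of every pattern class up to `t`. By the
Chernoff–Hoeffding bound a fixed class is split worse than that by at most `2·2^n·e^{-2εn}`
vectors, so by the union bound at most `2^{j+1}·2^n·e^{-2εn} ≤ |B|/2` vectors of `B` are bad.
Every balanced `j`-tuple therefore has at least `|B|/2` balanced extensions in `B`, which gives
`(|B|/2)^k` balanced `k`-tuples, and `2t ≤ 4√ε·n`.
-/

open Finset Real

section TupleCounting

variable {α : Type*} [Fintype α]

lemma card_filter_fin_succ {j : ℕ} (Q : (Fin (j + 1) → α) → Prop) [DecidablePred Q] :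
    #{g | Q g} = ∑ f : Fin j → α, #{b | Q (Fin.snoc f b)} := by
  simp_rw [card_filter]
  rw [← (Fin.snocEquiv fun _ => α).sum_comp, Fintype.sum_prod_type_right]
  rfl

lemma pow_le_card_filter_of_le_card_extensions (P : ∀ j, (Fin j → α) → Prop)
    [∀ j, DecidablePred (P j)] {c : ℝ} (hc : 0 ≤ c) {k : ℕ} (h0 : P 0 Fin.elim0)
    (hstep : ∀ j < k, ∀ f, P j f → c ≤ #{b | P (j + 1) (Fin.snoc f b)}) :
    c ^ k ≤ #{f | P k f} := by
  suffices ∀ j ≤ k, c ^ j ≤ #{f | P j f} from this k le_rfl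
  intro j hj
  induction j with
  | zero =>
    have : #{f : Fin 0 → α | P 0 f} = 1 := by
      rw [filter_true_of_mem fun f _ => Subsingleton.elim Fin.elim0 f ▸ h0, card_univ,
        Fintype.card_unique]
    rw [this, pow_zero, Nat.cast_one]
  | succ j ih =>
    calc c ^ (j + 1) = c ^ j * c := pow_succ c j
      _ ≤ #{f | P j f} * c := by gcongr; exact ih (by omega)
      _ = ∑ f ∈ {f | P j f}, c := by rw [sum_const, nsmul_eq_mul]
      _ ≤ ∑ f ∈ {f | P j f}, (#{b | P (j + 1) (Fin.snoc f b)} : ℝ) :=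
        sum_le_sum fun f hf => hstep j (by omega) f (mem_filter.1 hf).2
      _ ≤ ∑ f, (#{b | P (j + 1) (Fin.snoc f b)} : ℝ) :=
        sum_le_univ_sum_of_nonneg fun _ => by positivity
      _ = #{g | P (j + 1) g} := by rw [card_filter_fin_succ, Nat.cast_sum]

end TupleCounting

section Imbalance

variable {ι : Type*}

noncomputable def imbalance (S : Finset ι) (b : ι → Bool) : ℝ := #{i ∈ S | b i} - #S / 2

lemma imbalance_eq_sum (S : Finset ι) (b : ι → Bool) :
    imbalance S b = ∑ i ∈ S, if b i then (1 / 2 : ℝ) else -(1 / 2) := by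
  rw [imbalance, card_filter, card_eq_sum_ones, Nat.cast_sum, Nat.cast_sum, sum_div,
    ← sum_sub_distrib]
  refine sum_congr rfl fun i _ => ?_
  split_ifs <;> norm_num

lemma abs_card_filter_eq_sub_half (S : Finset ι) (b : ι → Bool) (c : Bool) :
    |(#{i ∈ S | b i = c} : ℝ) - #S / 2| = |imbalance S b| := by
  cases c
  · rw [imbalance, ← card_filter_add_card_filter_not (s := S) (p := fun i => b i = true),
      ← abs_neg]
    simp only [Bool.not_eq_true, Nat.cast_add]
    ring_nf
  · rfl

variable [Fintype ι] [DecidableEq ι]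

lemma sum_exp_mul_imbalance (S : Finset ι) (s : ℝ) :
    ∑ b : ι → Bool, exp (s * imbalance S b) = 2 ^ Fintype.card ι * cosh (s / 2) ^ #S := by
  have hprod (b : ι → Bool) : exp (s * imbalance S b) =
      ∏ i, if i ∈ S then exp (if b i then s / 2 else -(s / 2)) else 1 := by
    rw [imbalance_eq_sum, mul_sum, exp_sum, prod_ite_mem, univ_inter]
    refine prod_congr rfl fun i _ => ?_
    split_ifs <;> ring_nf
  have hfactor (i : ι) : ∑ c : Bool, (if i ∈ S then exp (if c then s / 2 else -(s / 2)) else 1) =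
      2 * if i ∈ S then cosh (s / 2) else 1 := by
    split_ifs <;> simp [cosh_eq]
    ring
  simp_rw [hprod]
  rw [← Fintype.prod_sum fun i (c : Bool) =>
    if i ∈ S then exp (if c then s / 2 else -(s / 2)) else 1]
  simp_rw [hfactor, prod_mul_distrib, prod_const, prod_ite_mem, univ_inter, prod_const, card_univ]

/-- Hoeffding's inequality for a uniformly random `b`, in counting form; `m` is any upper bound
for `#S`, so that the bound does not degenerate when `S = ∅`. -/
lemma card_le_abs_imbalance_le (S : Finset ι) {t m : ℝ} (ht : 0 ≤ t) (hm : 0 < m)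
    (hSm : #S ≤ m) :
    (#{b : ι → Bool | t ≤ |imbalance S b|} : ℝ) ≤
      2 * 2 ^ Fintype.card ι * exp (-2 * t ^ 2 / m) := by
  -- `s` minimises the exponent `m s² / 8 - s t` obtained below
  set s := 4 * t / m with hs
  have hs0 : 0 ≤ s := by positivity
  have hmarkov : (#{b | t ≤ |imbalance S b|} : ℝ) * exp (s * t) ≤
      ∑ b, (exp (s * imbalance S b) + exp (-s * imbalance S b)) := by
    rw [← nsmul_eq_mul]
    refine (card_nsmul_le_sum _ _ _ fun b hb => ?_).trans
      (sum_le_univ_sum_of_nonneg fun b => by positivity)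
    have hb : s * t ≤ s * |imbalance S b| := mul_le_mul_of_nonneg_left (mem_filter.1 hb).2 hs0
    rcases abs_choice (imbalance S b) with h | h <;> rw [h] at hb
    · linarith [exp_le_exp.2 hb, exp_pos (-s * imbalance S b)]
    · rw [mul_neg, ← neg_mul] at hb
      linarith [exp_le_exp.2 hb, exp_pos (s * imbalance S b)]
  have hmgf : ∑ b, (exp (s * imbalance S b) + exp (-s * imbalance S b)) ≤
      2 * 2 ^ Fintype.card ι * exp (m * s ^ 2 / 8) := by
    rw [sum_add_distrib, sum_exp_mul_imbalance, sum_exp_mul_imbalance, neg_div, cosh_neg,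
      ← two_mul, mul_assoc]
    gcongr
    calc cosh (s / 2) ^ #S ≤ exp ((s / 2) ^ 2 / 2) ^ #S := by gcongr; exact cosh_le_exp_half_sq _
      _ = exp (#S * s ^ 2 / 8) := by rw [← exp_nat_mul]; ring_nf
      _ ≤ exp (m * s ^ 2 / 8) := by gcongr
  have hexponent : m * s ^ 2 / 8 - s * t = -2 * t ^ 2 / m := by
    rw [hs]; field_simp; ring
  calc (#{b | t ≤ |imbalance S b|} : ℝ)
      = #{b | t ≤ |imbalance S b|} * exp (s * t) * exp (-(s * t)) := by
        rw [mul_assoc, ← exp_add, add_neg_cancel, exp_zero, mul_one]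
    _ ≤ 2 * 2 ^ Fintype.card ι * exp (m * s ^ 2 / 8) * exp (-(s * t)) :=
        mul_le_mul_of_nonneg_right (hmarkov.trans hmgf) (exp_pos _).le
    _ = 2 * 2 ^ Fintype.card ι * exp (-2 * t ^ 2 / m) := by
        rw [mul_assoc, ← exp_add, ← sub_eq_add_neg, hexponent]

end Imbalance

section Patterns

variable {ι : Type*} [Fintype ι] {j : ℕ}

def patternRows (f : Fin j → ι → Bool) (z : Fin j → Bool) : Finset ι :=
  {i | ∀ l, f l i = z l}

def IsBalanced (δ : ℝ) (f : Fin j → ι → Bool) : Prop :=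
  ∀ z, |(#(patternRows f z) : ℝ) - Fintype.card ι / 2 ^ j| ≤ δ

noncomputable instance (δ : ℝ) : DecidablePred (IsBalanced δ : (Fin j → ι → Bool) → Prop) :=
  fun _ => inferInstanceAs (Decidable (∀ _, _))

lemma patternRows_snoc (f : Fin j → ι → Bool) (b : ι → Bool) (z : Fin (j + 1) → Bool) :
    patternRows (Fin.snoc f b : Fin (j + 1) → ι → Bool) z =
      {i ∈ patternRows f (Fin.init z) | b i = z (Fin.last j)} := by
  ext i
  simp only [patternRows, mem_filter, mem_univ, true_and, Fin.forall_fin_succ', Fin.snoc_castSucc,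
    Fin.snoc_last]
  rfl

lemma isBalanced_elim0 {δ : ℝ} (hδ : 0 ≤ δ) : IsBalanced δ (Fin.elim0 : Fin 0 → ι → Bool) := by
  simpa [IsBalanced, patternRows] using hδ

/-- Splitting a class halves its error `2t` and the split itself adds at most `t`. -/
lemma IsBalanced.snoc {t : ℝ} {f : Fin j → ι → Bool} (hf : IsBalanced (2 * t) f) {b : ι → Bool}
    (hb : ∀ z, |imbalance (patternRows f z) b| ≤ t) :
    IsBalanced (2 * t) (Fin.snoc f b : Fin (j + 1) → ι → Bool) := by
  intro z
  rw [patternRows_snoc]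
  set S := patternRows f (Fin.init z)
  have hsplit : (#{i ∈ S | b i = z (Fin.last j)} : ℝ) - Fintype.card ι / 2 ^ (j + 1) =
      ((#{i ∈ S | b i = z (Fin.last j)} : ℝ) - #S / 2) +
        ((#S : ℝ) - Fintype.card ι / 2 ^ j) / 2 := by
    ring
  have htri := abs_add_le ((#{i ∈ S | b i = z (Fin.last j)} : ℝ) - #S / 2)
    (((#S : ℝ) - Fintype.card ι / 2 ^ j) / 2)
  rw [abs_div, abs_two, abs_card_filter_eq_sub_half] at htri
  rw [hsplit]
  linarith [hb (Fin.init z), hf (Fin.init z)]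

variable [DecidableEq ι]

lemma card_exists_le_abs_imbalance_le (f : Fin j → ι → Bool) {t : ℝ} (ht : 0 ≤ t)
    (hι : 0 < Fintype.card ι) :
    (#{b | ∃ z, t ≤ |imbalance (patternRows f z) b|} : ℝ) ≤
      2 ^ j * (2 * 2 ^ Fintype.card ι * exp (-2 * t ^ 2 / Fintype.card ι)) := by
  have hsub : ({b | ∃ z, t ≤ |imbalance (patternRows f z) b|} : Finset (ι → Bool)) ⊆
      univ.biUnion fun z => {b | t ≤ |imbalance (patternRows f z) b|} := by
    intro b hb
    simpa using hb
  calc (#{b | ∃ z, t ≤ |imbalance (patternRows f z) b|} : ℝ)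
      ≤ ∑ z : Fin j → Bool, (#{b | t ≤ |imbalance (patternRows f z) b|} : ℝ) :=
        mod_cast (card_le_card hsub).trans card_biUnion_le
    _ ≤ ∑ _z : Fin j → Bool, 2 * 2 ^ Fintype.card ι * exp (-2 * t ^ 2 / Fintype.card ι) :=
        sum_le_sum fun z _ => card_le_abs_imbalance_le _ ht (mod_cast hι)
          (mod_cast card_le_univ _)
    _ = _ := by simp

lemma half_card_le_card_filter_abs_imbalance_lt (B : Finset (ι → Bool)) (f : Fin j → ι → Bool)
    {t : ℝ} (ht : 0 ≤ t) (hι : 0 < Fintype.card ι)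
    (hB : 2 ^ (j + 1) * (2 * 2 ^ Fintype.card ι * exp (-2 * t ^ 2 / Fintype.card ι)) ≤ #B) :
    (#B : ℝ) / 2 ≤ #{b ∈ B | ∀ z, |imbalance (patternRows f z) b| < t} := by
  have hbad : #{b ∈ B | ¬ ∀ z, |imbalance (patternRows f z) b| < t} ≤
      #{b | ∃ z, t ≤ |imbalance (patternRows f z) b|} :=
    card_le_card fun b hb => by simpa using (mem_filter.1 hb).2
  have hsplit : (#{b ∈ B | ∀ z, |imbalance (patternRows f z) b| < t} : ℝ) +
      #{b ∈ B | ¬ ∀ z, |imbalance (patternRows f z) b| < t} = #B :=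
    mod_cast card_filter_add_card_filter_not _
  have hcount := card_exists_le_abs_imbalance_le f ht hι
  rw [pow_succ] at hB
  linarith [(Nat.cast_le (α := ℝ)).2 hbad]

lemma half_card_pow_le_card_balanced (B : Finset (ι → Bool)) {t : ℝ} (ht : 0 ≤ t)
    (hι : 0 < Fintype.card ι) {k : ℕ}
    (hB : 2 ^ k * (2 * 2 ^ Fintype.card ι * exp (-2 * t ^ 2 / Fintype.card ι)) ≤ #B) :
    ((#B : ℝ) / 2) ^ k ≤ #{f : Fin k → ι → Bool | (∀ l, f l ∈ B) ∧ IsBalanced (2 * t) f} := by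
  refine pow_le_card_filter_of_le_card_extensions
    (fun j f => (∀ l, f l ∈ B) ∧ IsBalanced (2 * t) f) (by positivity)
    ⟨fun l => l.elim0, isBalanced_elim0 (by positivity)⟩ fun j hj f ⟨hfB, hf⟩ => ?_
  have hB' : 2 ^ (j + 1) * (2 * 2 ^ Fintype.card ι * exp (-2 * t ^ 2 / Fintype.card ι)) ≤ #B :=
    le_trans (by gcongr; exacts [one_le_two, hj]) hB
  refine (half_card_le_card_filter_abs_imbalance_lt B f ht hι hB').trans (mod_cast card_le_card ?_)
  intro b hb
  obtain ⟨hbB, hbal⟩ := mem_filter.1 hb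
  refine mem_filter.2 ⟨mem_univ _, fun l => Fin.lastCases ?_ (fun l => ?_) l,
    hf.snoc fun z => (hbal z).le⟩
  · rwa [Fin.snoc_last]
  · rw [Fin.snoc_castSucc]; exact hfB l

end Patterns

lemma two_pow_mul_exp_le_rpow {ε : ℝ} (hε : 0 ≤ ε) (n : ℕ) :
    2 ^ n * exp (-(2 * ε * n)) ≤ (2 : ℝ) ^ ((1 - ε) * n) := by
  have hlog : log 2 ≤ 2 := (log_le_sub_one_of_pos two_pos).trans (by norm_num)
  rw [rpow_def_of_pos two_pos, ← rpow_natCast, rpow_def_of_pos two_pos, ← exp_add]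
  exact exp_le_exp.2 (by nlinarith [mul_nonneg hε (Nat.cast_nonneg n : (0 : ℝ) ≤ n)])

theorem stmt_11_general (k : ℕ) (ε : ℝ) (hε0 : 0 < ε)
    (n : ℕ) (hn : 1 ≤ n)
    (B : Finset (Fin n → Bool))
    (hB : (2:ℝ)^(k+1) * ((n:ℝ) + 1) * (2:ℝ) ^ ((1 - ε) * (n:ℝ)) ≤ (B.card : ℝ)) :
    ((B.card : ℝ) / 2)^k ≤
      (Nat.card {f : Fin k → (Fin n → Bool) // (∀ j, f j ∈ B) ∧
        ∀ z : Fin k → Bool,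
          (n:ℝ)/2^k - (4 * Real.sqrt ε) * n ≤
            ((Finset.univ.filter (fun i : Fin n => ∀ j, f j i = z j)).card : ℝ) ∧
          ((Finset.univ.filter (fun i : Fin n => ∀ j, f j i = z j)).card : ℝ) ≤
            (n:ℝ)/2^k + (4 * Real.sqrt ε) * n} : ℝ) := by
  have hn' : 0 < Fintype.card (Fin n) := by rwa [Fintype.card_fin]
  have hexp : -2 * (sqrt ε * n) ^ 2 / Fintype.card (Fin n) = -(2 * ε * n) := by
    rw [Fintype.card_fin, mul_pow, sq_sqrt hε0.le]
    field_simp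
  have hbudget : 2 ^ k * (2 * 2 ^ Fintype.card (Fin n) *
      exp (-2 * (sqrt ε * n) ^ 2 / Fintype.card (Fin n))) ≤ #B := by
    rw [hexp, Fintype.card_fin]
    calc _ = 2 ^ (k + 1) * (2 ^ n * exp (-(2 * ε * n))) := by ring
      _ ≤ 2 ^ (k + 1) * (((n : ℝ) + 1) * 2 ^ ((1 - ε) * n)) := by
          gcongr 2 ^ (k + 1) * ?_
          exact (two_pow_mul_exp_le_rpow hε0.le n).trans
            (le_mul_of_one_le_left (by positivity) (le_add_of_nonneg_left n.cast_nonneg))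
      _ ≤ #B := by rw [← mul_assoc]; exact hB
  refine (half_card_pow_le_card_balanced B (by positivity) hn' hbudget).trans ?_
  rw [Nat.card_eq_fintype_card, Fintype.card_subtype]
  refine Nat.cast_le.2 (card_le_card fun f hf => ?_)
  obtain ⟨hfB, hf⟩ := (mem_filter.1 hf).2
  refine mem_filter.2 ⟨mem_univ _, hfB, fun z => ?_⟩
  obtain ⟨hlower, hupper⟩ := abs_le.1 (hf z)
  rw [Fintype.card_fin] at hlower hupper
  unfold patternRows at hlower hupper
  have : 0 ≤ sqrt ε * n := by positivity
  constructor <;> linarith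

/-- Let `k ≥ 1`, `ε ∈ (0, 1/4^{k+2})`, `γ := 4√ε`, `n ≥ 1`, and let
`B ⊆ {0,1}^n` with `|B| ≥ 2^{k+1}·(n+1)·2^{(1−ε)n}`. Then the number of `k`-tuples
`(b_1,…,b_k) ∈ B^k` such that every pattern `z ∈ {0,1}^k` occurs as a row of the
`n × k` matrix `(b_1,…,b_k)` between `n/2^k − γn` and `n/2^k + γn` times is at least
`(|B|/2)^k`. -/
theorem stmt_11 (k : ℕ) (hk : 1 ≤ k) (ε : ℝ) (hε0 : 0 < ε)
    (hε1 : ε < 1 / 4^(k+2)) (n : ℕ) (hn : 1 ≤ n)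
    (B : Finset (Fin n → Bool))
    (hB : (2:ℝ)^(k+1) * ((n:ℝ) + 1) * (2:ℝ) ^ ((1 - ε) * (n:ℝ)) ≤ (B.card : ℝ)) :
    ((B.card : ℝ) / 2)^k ≤
      (Nat.card {f : Fin k → (Fin n → Bool) // (∀ j, f j ∈ B) ∧
        ∀ z : Fin k → Bool,
          (n:ℝ)/2^k - (4 * Real.sqrt ε) * n ≤
            ((Finset.univ.filter (fun i : Fin n => ∀ j, f j i = z j)).card : ℝ) ∧
          ((Finset.univ.filter (fun i : Fin n => ∀ j, f j i = z j)).card : ℝ) ≤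
            (n:ℝ)/2^k + (4 * Real.sqrt ε) * n} : ℝ) :=
  stmt_11_general k ε hε0 n hn B hB
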